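/- Let u ≠ v with v reachable from u, and let q be any vertex lying on the lexicographically-first shortest path P(u, v) with q ≠ v. Then the suffix of P(u, v) starting at q equals P(q, v). -/

import Mathlib

/-- `L` is a directed walk from `u` to `v`: a nonempty list of vertices starting at `u`,
ending at `v`, with consecutive vertices joined by edges. Its number of edges is `L.length - 1`. -/
def IsWalk {V : Type} (E : V → V → Prop) (u v : V) (L : List V) : Prop :=
  L ≠ [] ∧ L.head? = some u ∧ L.getLast? = some v ∧ L.Chain' E

/-- A directed path: a walk with pairwise distinct vertices. -/
def IsPath {V : Type} (E : V → V → Prop) (u v : V) (L : List V) : Prop :=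
  IsWalk E u v L ∧ L.Nodup

/-- The weight of a walk: the sum of the weights of its consecutive edges
(the trivial walk has weight 0). -/
def walkWeight {V : Type} (w : V → V → ℝ) (L : List V) : ℝ :=
  ((L.zip L.tail).map fun e => w e.1 e.2).sum

/-- `v` is reachable from `u`. -/
def Reaches {V : Type} (E : V → V → Prop) (u v : V) : Prop :=
  ∃ L, IsWalk E u v L

/-- BFS level: the minimum number of edges of a directed walk from `s` to `v`. -/
noncomputable def level {V : Type} (E : V → V → Prop) (s v : V) : ℕ :=
  sInf {k | ∃ L, IsWalk E s v L ∧ L.length = k + 1}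

/-- `L` is the lexicographically-first shortest path from `u` to `v`: a minimum-weight
directed path from `u` to `v` whose reversed sequence of vertex indices is
lexicographically smallest among all minimum-weight directed paths from `u` to `v`. -/
def IsLexFirstSP {V : Type} (E : V → V → Prop) (w : V → V → ℝ) (idx : V → ℕ)
    (u v : V) (L : List V) : Prop :=
  IsPath E u v L ∧
  (∀ M, IsPath E u v M → walkWeight w L ≤ walkWeight w M) ∧
  (∀ M, IsPath E u v M → walkWeight w M = walkWeight w L →
    ¬ List.Lex (· < ·) (M.reverse.map idx) (L.reverse.map idx))

/-- `pdist E w u v` is the minimum weight `d(u, v)` of a directed path from `u` to `v`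
(for `v` reachable from `u`); in particular `pdist E w u u = 0`, the weight of the
trivial path. -/
noncomputable def pdist {V : Type} (E : V → V → Prop) (w : V → V → ℝ) (u v : V) : ℝ :=
  sInf {r : ℝ | ∃ L, IsPath E u v L ∧ walkWeight w L = r}

/-!
Let `P(u, v) = L₁ ++ q :: L₂`. In a DAG every vertex of `L₁` has smaller index than every vertex
of any path from `q` to `v`, so `q :: T ↦ L₁ ++ q :: T` sends paths from `q` to `v` to paths from
`u` to `v`, adds the constant weight of `L₁ ++ [q]`, and, since the index sequences are compared
reversed with the common block `L₁` at the end, preserves strict lexicographic order.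
A better path from `q` to `v` would therefore give a better path from `u` to `v`.
-/

variable {V : Type} {E : V → V → Prop}

@[simp] lemma walkWeight_singleton (w : V → V → ℝ) (a : V) : walkWeight w [a] = 0 := by
  simp [walkWeight]

@[simp] lemma walkWeight_cons_cons (w : V → V → ℝ) (a b : V) (l : List V) :
    walkWeight w (a :: b :: l) = w a b + walkWeight w (b :: l) := by
  simp [walkWeight]

lemma walkWeight_append_cons (w : V → V → ℝ) (A : List V) (q : V) (B : List V) :
    walkWeight w (A ++ q :: B) = walkWeight w (A ++ [q]) + walkWeight w (q :: B) := by
  induction A with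
  | nil => simp
  | cons a A ih =>
    cases A with
    | nil => simp
    | cons b A =>
      simp only [List.cons_append] at ih ⊢
      rw [walkWeight_cons_cons, walkWeight_cons_cons, ih]
      ring

lemma List.Lex.append_of_forall_rel {α : Type*} {r : α → α → Prop} {A B C : List α}
    (h : List.Lex r A B) (hC : ∀ c ∈ C, ∀ b ∈ B, r c b) :
    List.Lex r (A ++ C) (B ++ C) := by
  induction h with
  | nil =>
    cases C with
    | nil => exact List.Lex.nil
    | cons c C => exact List.Lex.rel (hC c List.mem_cons_self _ List.mem_cons_self)
  | rel hab => exact List.Lex.rel hab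
  | cons _ ih => exact List.Lex.cons (ih fun c hc b hb => hC c hc b (List.mem_cons_of_mem _ hb))

lemma IsWalk.eq_cons {u v : V} {M : List V} (hM : IsWalk E u v M) : ∃ T, M = u :: T := by
  obtain ⟨hne, hhead, -⟩ := hM
  cases M with
  | nil => exact absurd rfl hne
  | cons a T => exact ⟨T, by simpa using hhead⟩

lemma idx_lt_of_isChain_append {idx : V → ℕ} (htopo : ∀ a b, E a b → idx a < idx b)
    {A B : List V} (h : (A ++ B).IsChain E) : ∀ x ∈ A, ∀ y ∈ B, idx x < idx y := by
  have : IsTrans V (fun a b => idx a < idx b) := ⟨fun _ _ _ => lt_trans⟩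
  exact (List.pairwise_append.mp (List.isChain_iff_pairwise.mp (h.imp htopo))).2.2

lemma IsPath.of_append_cons {u v q : V} {A B : List V} (h : IsPath E u v (A ++ q :: B)) :
    IsPath E q v (q :: B) := by
  obtain ⟨⟨-, -, hlast, hchain⟩, hnd⟩ := h
  rw [List.getLast?_append_of_ne_nil _ (List.cons_ne_nil q B)] at hlast
  exact ⟨⟨List.cons_ne_nil q B, rfl, hlast, (List.isChain_append.mp hchain).2.1⟩,
    (List.nodup_append.mp hnd).2.1⟩

lemma IsPath.append_cons_of_isPath {idx : V → ℕ} (htopo : ∀ a b, E a b → idx a < idx b)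
    {u x q v : V} {A B T : List V} (h : IsPath E u x (A ++ q :: B))
    (hT : IsPath E q v (q :: T)) : IsPath E u v (A ++ q :: T) := by
  obtain ⟨⟨-, hhead, -, hchain⟩, hnd⟩ := h
  obtain ⟨⟨-, -, hlast, hchainT⟩, hndT⟩ := hT
  obtain ⟨hchainA, -, hlink⟩ := List.isChain_append.mp hchain
  have hchain' : (A ++ q :: T).IsChain E :=
    List.isChain_append.mpr ⟨hchainA, hchainT, by simpa using hlink⟩
  refine ⟨⟨by simp, ?_, ?_, hchain'⟩, List.nodup_append.mpr
    ⟨(List.nodup_append.mp hnd).1, hndT, fun a ha b hb => ?_⟩⟩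
  · cases A <;> simpa using hhead
  · rwa [List.getLast?_append_of_ne_nil _ (List.cons_ne_nil q T)]
  · -- `A` precedes `q :: T` topologically, so gluing creates no repeated vertex.
    exact (idx_lt_of_isChain_append htopo hchain' a ha b hb).ne ∘ congrArg idx

theorem stmt10_general (V : Type) (E : V → V → Prop) (w : V → V → ℝ)
    (idx : V → ℕ)
    (htopo : ∀ a b, E a b → idx a < idx b)
    (u v : V)
    (L : List V) (hL : IsLexFirstSP E w idx u v L)
    (q : V) :
    ∀ L₁ L₂ : List V, L = L₁ ++ q :: L₂ → IsLexFirstSP E w idx q v (q :: L₂) := by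
  rintro L₁ L₂ rfl
  obtain ⟨hP, hmin, hlexmin⟩ := hL
  have hprefix_lt : ∀ a ∈ L₁, ∀ b ∈ q :: L₂, idx a < idx b :=
    idx_lt_of_isChain_append htopo hP.1.2.2.2
  refine ⟨hP.of_append_cons, fun M hM => ?_, fun M hM hw hlt => ?_⟩
  · obtain ⟨T, rfl⟩ := hM.1.eq_cons
    have := hmin _ (hP.append_cons_of_isPath htopo hM)
    rw [walkWeight_append_cons, walkWeight_append_cons w L₁ q T] at this
    linarith
  · obtain ⟨T, rfl⟩ := hM.1.eq_cons
    refine hlexmin _ (hP.append_cons_of_isPath htopo hM)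
      (by rw [walkWeight_append_cons, walkWeight_append_cons w L₁ q L₂, hw]) ?_
    simp only [List.reverse_append, List.map_append]
    refine hlt.append_of_forall_rel ?_
    simp only [List.mem_map, List.mem_reverse]
    rintro _ ⟨a, ha, rfl⟩ _ ⟨b, hb, rfl⟩
    exact hprefix_lt a ha b hb

/-- In a finite DAG with a topological numbering `idx`, let `u ≠ v` with
`v` reachable from `u`, and let `q` be any vertex lying on the lexicographically-first
shortest path `P(u, v)` with `q ≠ v`. Then the suffix of `P(u, v)` starting at `q` equals
the lexicographically-first shortest path `P(q, v)`. -/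
theorem stmt10 (V : Type) [Fintype V] (E : V → V → Prop) (w : V → V → ℝ)
    (idx : V → ℕ) (hinj : Function.Injective idx)
    (htopo : ∀ a b, E a b → idx a < idx b)
    (u v : V) (huv : u ≠ v) (hr : Reaches E u v)
    (L : List V) (hL : IsLexFirstSP E w idx u v L)
    (q : V) (hqL : q ∈ L) (hqv : q ≠ v) :
    ∀ L₁ L₂ : List V, L = L₁ ++ q :: L₂ → IsLexFirstSP E w idx q v (q :: L₂) :=
  stmt10_general V E w idx htopo u v L hL q
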